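/- Let c > 0, r₂ ∈ ℝ, and let A ⊆ [0, 2π] be a measurable set. Let G : ℝ × ℝ → ℝ satisfy: G(r, θ) > 0 for all r ≥ r₂ and θ ∈ [0, 2π]; for each θ ∈ A, the function r ↦ G(r, θ) is twice differentiable on [r₂, ∞) with ∂²G/∂r²(r, θ) ≥ c² · G(r, θ) and ∂G/∂r(r₂, θ) > 0; the function θ ↦ G(r₂, θ) is integrable on A. Then for every R ≥ r₂ and every differentiable function r : [0, 2π] → ℝ with r(θ) ≥ R for all θ (and with θ ↦ √(r'(θ)² + G(r(θ), θ)²) integrable), one has ∫₀^{2π} √(r'(θ)² + G(r(θ), θ)²) dθ ≥ cosh(c(R − r₂)) · ∫_A G(r₂, θ) dθ. -/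

import Mathlib

open Set Real MeasureTheory

/-! For `θ ∈ A` the profile `f = G(·, θ)` satisfies `f'' ≥ c² f` and `f'(r₂) > 0`. Comparing it with
`g(x) = cosh (c (x - r₂))`, which solves `g'' = c² g`, `g'(r₂) = 0`, the Wronskian `f' g - f g'`
starts at `f'(r₂) ≥ 0` and is nondecreasing, so `f / g` is nondecreasing and
`G(x, θ) ≥ cosh (c (x - r₂)) G(r₂, θ)` for `x ≥ r₂`. Since `r(θ) ≥ R ≥ r₂`, the integrand of the
length is at least `|G(r(θ), θ)| ≥ cosh (c (R - r₂)) G(r₂, θ)` on `A`, and it is nonnegative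
elsewhere on `[0, 2π]`. -/

theorem monotoneOn_Ici_of_hasDerivWithinAt_nonneg {a : ℝ} {f f' : ℝ → ℝ}
    (hf : ∀ x ∈ Ici a, HasDerivWithinAt f (f' x) (Ici a) x)
    (hf' : ∀ x ∈ Ioi a, 0 ≤ f' x) : MonotoneOn f (Ici a) :=
  monotoneOn_of_hasDerivWithinAt_nonneg (convex_Ici a)
    (fun x hx => (hf x hx).continuousWithinAt)
    (fun x hx => (hf x (interior_subset hx)).mono interior_subset)
    (fun x hx => hf' x (interior_Ici (a := a) ▸ hx))

theorem hasDerivAt_cosh_mul_sub (c a x : ℝ) :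
    HasDerivAt (fun y => cosh (c * (y - a))) (c * sinh (c * (x - a))) x := by
  have := (hasDerivAt_cosh _).comp x (((hasDerivAt_id x).sub_const a).const_mul c)
  simpa [Function.comp_def, mul_comm] using this

theorem hasDerivAt_mul_sinh_mul_sub (c a x : ℝ) :
    HasDerivAt (fun y => c * sinh (c * (y - a))) (c ^ 2 * cosh (c * (x - a))) x := by
  have := ((hasDerivAt_sinh _).comp x (((hasDerivAt_id x).sub_const a).const_mul c)).const_mul c
  simp only [Function.comp_def, id, mul_one] at this
  exact this.congr_deriv (by ring)

section CoshComparison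

variable {c a : ℝ} {f f' f'' : ℝ → ℝ}

theorem wronskian_cosh_nonneg
    (hf : ∀ x ∈ Ici a, HasDerivWithinAt f (f' x) (Ici a) x)
    (hf' : ∀ x ∈ Ici a, HasDerivWithinAt f' (f'' x) (Ici a) x)
    (hineq : ∀ x ∈ Ici a, c ^ 2 * f x ≤ f'' x) (ha : 0 ≤ f' a) :
    ∀ x ∈ Ici a, 0 ≤ f' x * cosh (c * (x - a)) - f x * (c * sinh (c * (x - a))) := by
  have hW : ∀ x ∈ Ici a, HasDerivWithinAt
      (fun y => f' y * cosh (c * (y - a)) - f y * (c * sinh (c * (y - a))))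
      ((f'' x - c ^ 2 * f x) * cosh (c * (x - a))) (Ici a) x := by
    intro x hx
    exact (((hf' x hx).mul (hasDerivAt_cosh_mul_sub c a x).hasDerivWithinAt).sub
      ((hf x hx).mul (hasDerivAt_mul_sinh_mul_sub c a x).hasDerivWithinAt)).congr_deriv (by ring)
  have hmono := monotoneOn_Ici_of_hasDerivWithinAt_nonneg hW fun x hx =>
    mul_nonneg (sub_nonneg.2 (hineq x (Ioi_subset_Ici_self hx))) (cosh_pos _).le
  intro x hx
  have := hmono self_mem_Ici hx hx
  simp only [sub_self, mul_zero, cosh_zero, sinh_zero, mul_one, sub_zero] at this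
  exact ha.trans this

theorem cosh_mul_le_of_sq_mul_le_deriv2
    (hf : ∀ x ∈ Ici a, HasDerivWithinAt f (f' x) (Ici a) x)
    (hf' : ∀ x ∈ Ici a, HasDerivWithinAt f' (f'' x) (Ici a) x)
    (hineq : ∀ x ∈ Ici a, c ^ 2 * f x ≤ f'' x) (ha : 0 ≤ f' a) :
    ∀ x ∈ Ici a, cosh (c * (x - a)) * f a ≤ f x := by
  have hq : ∀ x ∈ Ici a, HasDerivWithinAt (fun y => f y / cosh (c * (y - a)))
      ((f' x * cosh (c * (x - a)) - f x * (c * sinh (c * (x - a)))) / cosh (c * (x - a)) ^ 2)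
      (Ici a) x := fun x hx =>
    (hf x hx).div (hasDerivAt_cosh_mul_sub c a x).hasDerivWithinAt (cosh_pos _).ne'
  have hmono := monotoneOn_Ici_of_hasDerivWithinAt_nonneg hq fun x hx =>
    div_nonneg (wronskian_cosh_nonneg hf hf' hineq ha x (Ioi_subset_Ici_self hx)) (sq_nonneg _)
  intro x hx
  have := hmono self_mem_Ici hx hx
  dsimp only at this
  rwa [sub_self, mul_zero, cosh_zero, div_one, le_div_iff₀ (cosh_pos _), mul_comm] at this

theorem cosh_mul_le_abs_of_sq_mul_le_deriv2
    (hf : ∀ x ∈ Ici a, HasDerivWithinAt f (f' x) (Ici a) x)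
    (hf' : ∀ x ∈ Ici a, HasDerivWithinAt f' (f'' x) (Ici a) x)
    (hineq : ∀ x ∈ Ici a, c ^ 2 * f x ≤ f'' x) (ha : 0 ≤ f' a)
    {R x : ℝ} (haR : a ≤ R) (hRx : R ≤ x) :
    cosh (c * (R - a)) * f a ≤ |f x| := by
  rcases le_or_gt 0 (f a) with hfa | hfa
  · have hcosh : cosh (c * (R - a)) ≤ cosh (c * (x - a)) := by
      rw [cosh_le_cosh, abs_mul, abs_mul, abs_of_nonneg (sub_nonneg.2 haR),
        abs_of_nonneg (sub_nonneg.2 (haR.trans hRx))]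
      gcongr
    calc cosh (c * (R - a)) * f a ≤ cosh (c * (x - a)) * f a := by gcongr
      _ ≤ f x := cosh_mul_le_of_sq_mul_le_deriv2 hf hf' hineq ha x (haR.trans hRx)
      _ ≤ |f x| := le_abs_self _
  · exact (mul_neg_of_pos_of_neg (cosh_pos _) hfa).le.trans (abs_nonneg _)

end CoshComparison

theorem setIntegral_le_intervalIntegral_of_nonneg {f : ℝ → ℝ} {A : Set ℝ} {a b : ℝ}
    (hab : a ≤ b) (hA : A ⊆ Icc a b) (hf : ∀ x ∈ Icc a b, 0 ≤ f x)
    (hfi : IntervalIntegrable f volume a b) :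
    ∫ x in A, f x ≤ ∫ x in a..b, f x := by
  rw [intervalIntegral.integral_of_le hab, ← integral_Icc_eq_integral_Ioc]
  exact setIntegral_mono_set ((intervalIntegrable_iff_integrableOn_Icc_of_le hab).1 hfi)
    (ae_restrict_of_forall_mem measurableSet_Icc hf) hA.eventuallyLE

theorem stmt7_general (c r₂ : ℝ)
    (A : Set ℝ) (hA : MeasurableSet A) (hAsub : A ⊆ Icc (0:ℝ) (2 * π))
    (G Gr Grr : ℝ × ℝ → ℝ)
    (hd1 : ∀ θ ∈ A, ∀ r ∈ Ici r₂,
      HasDerivWithinAt (fun s => G (s, θ)) (Gr (r, θ)) (Ici r₂) r)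
    (hd2 : ∀ θ ∈ A, ∀ r ∈ Ici r₂,
      HasDerivWithinAt (fun s => Gr (s, θ)) (Grr (r, θ)) (Ici r₂) r)
    (hineq : ∀ θ ∈ A, ∀ r ∈ Ici r₂, c ^ 2 * G (r, θ) ≤ Grr (r, θ))
    (hder : ∀ θ ∈ A, 0 < Gr (r₂, θ))
    (hint : IntegrableOn (fun θ => G (r₂, θ)) A)
    (R : ℝ) (hR : r₂ ≤ R)
    (r r' : ℝ → ℝ)
    (hrge : ∀ θ ∈ Icc (0:ℝ) (2 * π), R ≤ r θ)
    (hint2 : IntervalIntegrable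
      (fun θ => Real.sqrt ((r' θ) ^ 2 + (G (r θ, θ)) ^ 2)) volume 0 (2 * π)) :
    Real.cosh (c * (R - r₂)) * ∫ θ in A, G (r₂, θ) ≤
      ∫ θ in (0:ℝ)..(2 * π), Real.sqrt ((r' θ) ^ 2 + (G (r θ, θ)) ^ 2) := by
  have h2pi : (0:ℝ) ≤ 2 * π := by positivity
  have hpointwise : ∀ θ ∈ A,
      cosh (c * (R - r₂)) * G (r₂, θ) ≤ √((r' θ) ^ 2 + (G (r θ, θ)) ^ 2) := fun θ hθ =>
    (cosh_mul_le_abs_of_sq_mul_le_deriv2 (hd1 θ hθ) (hd2 θ hθ) (hineq θ hθ) (hder θ hθ).le hR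
      (hrge θ (hAsub hθ))).trans (abs_le_sqrt (le_add_of_nonneg_left (sq_nonneg _)))
  calc cosh (c * (R - r₂)) * ∫ θ in A, G (r₂, θ)
      = ∫ θ in A, cosh (c * (R - r₂)) * G (r₂, θ) := (integral_const_mul _ _).symm
    _ ≤ ∫ θ in A, √((r' θ) ^ 2 + (G (r θ, θ)) ^ 2) :=
      setIntegral_mono_on (hint.const_mul _)
        (((intervalIntegrable_iff_integrableOn_Icc_of_le h2pi).1 hint2).mono_set hAsub) hA
        hpointwise
    _ ≤ ∫ θ in (0:ℝ)..(2 * π), √((r' θ) ^ 2 + (G (r θ, θ)) ^ 2) :=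
      setIntegral_le_intervalIntegral_of_nonneg h2pi hAsub (fun _ _ => sqrt_nonneg _) hint2

/-- Key length estimate in the proof of Theorem 3.7: any curve `σ(θ) = (r(θ), θ)`
staying in the region `{r ≥ R}` has length at least
`cosh(c(R − r₂)) ∫_A G(r₂, θ) dθ`. -/
theorem stmt7 (c r₂ : ℝ) (hc : 0 < c)
    (A : Set ℝ) (hA : MeasurableSet A) (hAsub : A ⊆ Icc (0:ℝ) (2 * π))
    (G Gr Grr : ℝ × ℝ → ℝ)
    (hGpos : ∀ r ∈ Ici r₂, ∀ θ ∈ Icc (0:ℝ) (2 * π), 0 < G (r, θ))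
    (hd1 : ∀ θ ∈ A, ∀ r ∈ Ici r₂,
      HasDerivWithinAt (fun s => G (s, θ)) (Gr (r, θ)) (Ici r₂) r)
    (hd2 : ∀ θ ∈ A, ∀ r ∈ Ici r₂,
      HasDerivWithinAt (fun s => Gr (s, θ)) (Grr (r, θ)) (Ici r₂) r)
    (hineq : ∀ θ ∈ A, ∀ r ∈ Ici r₂, c ^ 2 * G (r, θ) ≤ Grr (r, θ))
    (hder : ∀ θ ∈ A, 0 < Gr (r₂, θ))
    (hint : IntegrableOn (fun θ => G (r₂, θ)) A)
    (R : ℝ) (hR : r₂ ≤ R)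
    (r r' : ℝ → ℝ)
    (hr : ∀ θ ∈ Icc (0:ℝ) (2 * π), HasDerivWithinAt r (r' θ) (Icc (0:ℝ) (2 * π)) θ)
    (hrge : ∀ θ ∈ Icc (0:ℝ) (2 * π), R ≤ r θ)
    (hint2 : IntervalIntegrable
      (fun θ => Real.sqrt ((r' θ) ^ 2 + (G (r θ, θ)) ^ 2)) volume 0 (2 * π)) :
    Real.cosh (c * (R - r₂)) * ∫ θ in A, G (r₂, θ) ≤
      ∫ θ in (0:ℝ)..(2 * π), Real.sqrt ((r' θ) ^ 2 + (G (r θ, θ)) ^ 2) :=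
  stmt7_general c r₂ A hA hAsub G Gr Grr hd1 hd2 hineq hder hint R hR r r' hrge hint2
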